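/- Fix an integer i ≥ 2 and integers m_1, …, m_{i−1} ≥ 1. Then λ(R_{(m_1,…,m_{i−1},m_i)}) → λ(R_{(m_1,…,m_{i−1})}) as m_i → ∞; that is, for every ε > 0 there exists an integer M such that for all integers m_i ≥ M, |λ(R_{(m_1,…,m_{i−1},m_i)}) − λ(R_{(m_1,…,m_{i−1})})| < ε. -/

import Mathlib

open Polynomial

/-- The polynomials `R_{(m_1, …, m_i)}` of Kin–Takasawa (the sequence `m` is indexed
starting from `1`; the value at `0` is a dummy): `R_{(m_1)}(t) = t^{m_1+1}(t-1) - 2t`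
and `R_{(m_1,…,m_i)}(t) = t^{m_i}(t-1) R_{(m_1,…,m_{i-1})}(t)
+ (-1)^i 2t (R_{(m_1,…,m_{i-1})})_*(t)` for `i ≥ 2`, where `f_*` is the reciprocal
polynomial `t^(deg f) f(1/t)`, i.e. `Polynomial.reverse`. -/
noncomputable def Rpoly (m : ℕ → ℕ) : ℕ → Polynomial ℤ
  | 0 => 1
  | 1 => X ^ (m 1 + 1) * (X - 1) - 2 * X
  | (i + 2) => X ^ (m (i + 2)) * (X - 1) * Rpoly m (i + 1)
      + (-1 : Polynomial ℤ) ^ (i + 2) * (2 * X) * (Rpoly m (i + 1)).reverse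

/-- The polynomial `P_{(m_1, …, m_{k+1})}(t) = t^{m_{k+1}} R_{(m_1,…,m_k)}(t)
+ (-1)^{k+1} (R_{(m_1,…,m_k)})_*(t)`, whose largest root is the dilatation of the
pseudo-Anosov braid `β_{(m_1,…,m_{k+1})}`. -/
noncomputable def Ppoly (m : ℕ → ℕ) (k : ℕ) : Polynomial ℤ :=
  X ^ (m (k + 1)) * Rpoly m k + (-1 : Polynomial ℤ) ^ (k + 1) * (Rpoly m k).reverse

/-- For an integer polynomial `f`, the maximal absolute value of its complex roots. -/
noncomputable def maxRootAbs (f : Polynomial ℤ) : ℝ :=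
  sSup ((fun z : ℂ => ‖z‖) '' {z : ℂ | Polynomial.aeval z f = 0})

/-!
Write `R_{(m_1,…,m_{i-1},n)} = X^n (X - 1) f + B` with `f = R_{(m_1,…,m_{i-1})}` and `B`
independent of `n`. For `|z| > 1` the roots of `X^n A + B` approach those of `A` as `n → ∞`:
a root with `|z| ≥ L > λ(A)` is impossible for large `n`, because `|z|^n |A(z)|` outgrows
`|B(z)|`; and near a root `z₀` of `A` with `|z₀| = λ(A) > 1` the function `A + B / z^n` is a
uniformly small perturbation of `A`, so by the minimum modulus principle it vanishes close to
`z₀`. Finally `f = X h` with `h` monic and `|h(0)| = 2`, so `f` has a root outside the unit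
disk, whence `λ((X - 1) f) = λ(f) > 1`.
-/

open Filter Metric Topology

section maxRootAbs

variable {f : ℤ[X]}

lemma isGreatest_maxRootAbs (hf : f ≠ 0) {z : ℂ} (hz : aeval z f = 0) :
    IsGreatest ((fun z : ℂ => ‖z‖) '' {z | aeval z f = 0}) (maxRootAbs f) := by
  have hfin : ((fun z : ℂ => ‖z‖) '' {z | aeval z f = 0}).Finite :=
    ((f.rootSet_finite ℂ).subset fun w hw => (mem_rootSet_of_ne hf).2 hw).image _
  exact ⟨(Set.image_nonempty.2 ⟨z, hz⟩).csSup_mem hfin, fun _ ha => le_csSup hfin.bddAbove ha⟩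

lemma maxRootAbs_le {a : ℝ} (ha : 0 ≤ a) (h : ∀ z : ℂ, aeval z f = 0 → ‖z‖ ≤ a) :
    maxRootAbs f ≤ a :=
  Real.sSup_le (by rintro _ ⟨z, hz, rfl⟩; exact h z hz) ha

lemma norm_le_maxRootAbs {a : ℝ} (h : ∀ z : ℂ, aeval z f = 0 → ‖z‖ ≤ a) {z : ℂ}
    (hz : aeval z f = 0) : ‖z‖ ≤ maxRootAbs f :=
  le_csSup ⟨a, by rintro _ ⟨w, hw, rfl⟩; exact h w hw⟩ ⟨z, hz, rfl⟩

lemma maxRootAbs_X_sub_one_mul (hf : f ≠ 0) {z : ℂ} (hz : aeval z f = 0)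
    (hz1 : 1 ≤ ‖z‖) : maxRootAbs ((X - 1) * f) = maxRootAbs f := by
  obtain ⟨hmem, hmax⟩ := isGreatest_maxRootAbs hf hz
  have hroots : {w : ℂ | aeval w ((X - 1) * f) = 0} = insert 1 {w | aeval w f = 0} := by
    ext w
    simp [sub_eq_zero]
  refine IsGreatest.csSup_eq ⟨?_, ?_⟩
  · rw [hroots, Set.image_insert_eq]
    exact Or.inr hmem
  · rw [hroots, Set.image_insert_eq, upperBounds_insert]
    exact ⟨by simpa using hz1.trans (hmax ⟨z, hz, rfl⟩), hmax⟩

end maxRootAbs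

/-- Minimum modulus principle: otherwise `1 / g` would violate the maximum modulus principle. -/
theorem exists_mem_ball_eq_zero_of_norm_lt {g : ℂ → ℂ} {z₀ : ℂ} {r : ℝ} (hr : 0 < r)
    (hg : DiffContOnCl ℂ g (ball z₀ r)) (hlt : ∀ z ∈ sphere z₀ r, ‖g z₀‖ < ‖g z‖) :
    ∃ z ∈ ball z₀ r, g z = 0 := by
  by_contra! hne
  have hne' : ∀ z ∈ closure (ball z₀ r), g z ≠ 0 := by
    rw [closure_ball z₀ hr.ne', ← ball_union_sphere]
    rintro z (hz | hz)
    · exact hne z hz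
    · exact norm_pos_iff.1 ((norm_nonneg _).trans_lt (hlt z hz))
  obtain ⟨w, hw, hmax⟩ := Complex.exists_mem_frontier_isMaxOn_norm isBounded_ball
    (nonempty_ball.2 hr) (hg.inv hne')
  rw [frontier_ball z₀ hr.ne'] at hw
  have hle : ‖(g z₀)⁻¹‖ ≤ ‖(g w)⁻¹‖ := hmax (subset_closure (mem_ball_self hr))
  rw [norm_inv, norm_inv, inv_le_inv₀ (norm_pos_iff.2 (hne z₀ (mem_ball_self hr)))
    ((norm_nonneg _).trans_lt (hlt w hw))] at hle
  exact (hlt w hw).not_ge hle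

lemma norm_eval_le_of_one_le_norm (p : ℂ[X]) {z : ℂ} (hz : 1 ≤ ‖z‖) :
    ‖p.eval z‖ ≤ (p.sum fun _ a => ‖a‖) * ‖z‖ ^ p.natDegree := by
  rw [eval_eq_sum, Polynomial.sum_def, Polynomial.sum_def, Finset.sum_mul]
  refine (norm_sum_le _ _).trans (Finset.sum_le_sum fun e he => ?_)
  rw [norm_mul, norm_pow]
  exact mul_le_mul_of_nonneg_left (pow_le_pow_right₀ hz (le_natDegree_of_mem_supp e he))
    (norm_nonneg _)

lemma le_norm_eval_of_forall_isRoot_norm_le (p : ℂ[X]) {r : ℝ}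
    (hr : ∀ w, p.IsRoot w → ‖w‖ ≤ r) {z : ℂ} (hz : r ≤ ‖z‖) :
    ‖p.leadingCoeff‖ * (‖z‖ - r) ^ p.natDegree ≤ ‖p.eval z‖ := by
  have hsplit := IsAlgClosed.splits p
  have hprod : ‖(p.roots.map (z - ·)).prod‖ = (p.roots.map fun w => ‖z - w‖).prod := by
    simpa [Multiset.map_map] using map_multiset_prod (normHom : ℂ →*₀ ℝ) (p.roots.map (z - ·))
  rw [hsplit.eval_eq_prod_roots, norm_mul, hprod, hsplit.natDegree_eq_card_roots,
    ← Multiset.prod_replicate, ← Multiset.map_const']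
  gcongr
  refine Multiset.prod_map_le_prod_map₀ _ _ (fun _ _ => sub_nonneg.2 hz) fun w hw => ?_
  have hw_le := hr w (isRoot_of_mem_roots hw)
  have htri := norm_sub_norm_le z w
  linarith

lemma isRoot_X_pow_mul_add_iff {R : Type*} [CommRing R] {P Q : R[X]} {n : ℕ} {z : R} :
    (X ^ n * P + Q).IsRoot z ↔ z ^ n * P.eval z + Q.eval z = 0 := by
  simp [IsRoot]

theorem eventually_forall_isRoot_X_pow_mul_add_norm_lt {P : ℂ[X]} (hP : P ≠ 0) (Q : ℂ[X])
    {r L : ℝ} (hr : ∀ w, P.IsRoot w → ‖w‖ ≤ r) (hrL : r < L) (hL : 1 < L) :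
    ∀ᶠ n in atTop, ∀ z, (X ^ n * P + Q).IsRoot z → ‖z‖ < L := by
  set c := ‖P.leadingCoeff‖ * (L - r) ^ P.natDegree
  have hc : 0 < c :=
    mul_pos (norm_pos_iff.2 (leadingCoeff_ne_zero.2 hP)) (pow_pos (sub_pos.2 hrL) _)
  set S := Q.sum fun _ a => ‖a‖
  set e := Q.natDegree
  obtain ⟨N, hN⟩ := eventually_atTop.1
    (((tendsto_pow_atTop_atTop_of_one_lt hL).atTop_mul_const hc).eventually_gt_atTop S)
  filter_upwards [eventually_ge_atTop (N + e)] with n hn z hz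
  by_contra! hLz
  obtain ⟨k, rfl⟩ : ∃ k, n = k + e := ⟨n - e, by omega⟩
  have hz1 : 1 ≤ ‖z‖ := hL.le.trans hLz
  have hPz : c ≤ ‖P.eval z‖ :=
    (le_norm_eval_of_forall_isRoot_norm_le P hr (hrL.le.trans hLz)).trans'
      (mul_le_mul_of_nonneg_left (pow_le_pow_left₀ (sub_nonneg.2 hrL.le) (by linarith) _)
        (norm_nonneg _))
  have hQz : ‖z‖ ^ (k + e) * ‖P.eval z‖ = ‖Q.eval z‖ := by
    rw [← norm_pow, ← norm_mul, eq_neg_of_add_eq_zero_left (isRoot_X_pow_mul_add_iff.1 hz),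
      norm_neg]
  have hkey : ‖z‖ ^ k * c ≤ S := by
    refine le_of_mul_le_mul_right ?_ (pow_pos (zero_lt_one.trans_le hz1) e)
    calc ‖z‖ ^ k * c * ‖z‖ ^ e ≤ ‖z‖ ^ (k + e) * ‖P.eval z‖ := by
          rw [pow_add, mul_right_comm]; gcongr
      _ = ‖Q.eval z‖ := hQz
      _ ≤ S * ‖z‖ ^ e := norm_eval_le_of_one_le_norm Q hz1
  exact (hN k (by omega)).not_ge ((mul_le_mul_of_nonneg_right
    (pow_le_pow_left₀ (by positivity) hLz k) hc.le).trans hkey)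

theorem eventually_exists_isRoot_X_pow_mul_add_mem_ball {P : ℂ[X]} (Q : ℂ[X]) {z₀ : ℂ} {r : ℝ}
    (hr : 0 < r) (hz₀ : P.IsRoot z₀) (hsphere : ∀ z ∈ sphere z₀ r, ¬P.IsRoot z)
    (hρ : 1 < ‖z₀‖ - r) :
    ∀ᶠ n in atTop, ∃ z ∈ ball z₀ r, (X ^ n * P + Q).IsRoot z := by
  set ρ := ‖z₀‖ - r
  have hρz : ∀ z ∈ closedBall z₀ r, ρ ≤ ‖z‖ := fun z hz => by
    have := norm_sub_norm_le z₀ z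
    rw [← dist_eq_norm, dist_comm] at this
    linarith [mem_closedBall.1 hz]
  have hz_ne : ∀ z ∈ closedBall z₀ r, z ≠ 0 := fun z hz =>
    norm_pos_iff.1 ((zero_lt_one.trans hρ).trans_le (hρz z hz))
  obtain ⟨B, hB⟩ := (isCompact_closedBall z₀ r).exists_bound_of_continuousOn
    Q.continuous.continuousOn
  obtain ⟨w, hw, hwmin⟩ := (isCompact_sphere z₀ r).exists_isMinOn
    (NormedSpace.sphere_nonempty.2 hr.le) P.continuous.norm.continuousOn
  have hc : 0 < ‖P.eval w‖ := norm_pos_iff.2 (hsphere w hw)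
  have hsmall : Tendsto (fun n : ℕ => B / ρ ^ n) atTop (𝓝 0) :=
    tendsto_const_nhds.div_atTop (tendsto_pow_atTop_atTop_of_one_lt hρ)
  filter_upwards [hsmall.eventually_lt_const (half_pos hc)] with n hn
  have hQ : ∀ z ∈ closedBall z₀ r, ‖Q.eval z / z ^ n‖ ≤ B / ρ ^ n := fun z hz => by
    rw [norm_div, norm_pow]
    exact div_le_div₀ ((norm_nonneg _).trans (hB z hz)) (hB z hz) (pow_pos (zero_lt_one.trans hρ) n)
      (pow_le_pow_left₀ (zero_lt_one.trans hρ).le (hρz z hz) n)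
  set g : ℂ → ℂ := fun z => P.eval z + Q.eval z / z ^ n
  have hg : DiffContOnCl ℂ g (ball z₀ r) := by
    refine DifferentiableOn.diffContOnCl ?_
    rw [closure_ball z₀ hr.ne']
    exact P.differentiable.differentiableOn.add (Q.differentiable.differentiableOn.div
      (differentiable_pow n).differentiableOn fun z hz => pow_ne_zero n (hz_ne z hz))
  have hlt : ∀ z ∈ sphere z₀ r, ‖g z₀‖ < ‖g z‖ := fun z hz => by
    have h₀ := hQ z₀ (mem_closedBall_self hr.le)
    have h₁ := hQ z (sphere_subset_closedBall hz)
    have h₂ : ‖P.eval w‖ ≤ ‖P.eval z‖ := hwmin hz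
    have h₃ := norm_sub_norm_le (P.eval z) (-(Q.eval z / z ^ n))
    simp only [g, hz₀.eq_zero, zero_add, sub_neg_eq_add, norm_neg] at h₃ ⊢
    linarith
  obtain ⟨z, hz, hgz⟩ := exists_mem_ball_eq_zero_of_norm_lt hr hg hlt
  refine ⟨z, hz, isRoot_X_pow_mul_add_iff.2 ?_⟩
  have hzn := pow_ne_zero n (hz_ne z (ball_subset_closedBall hz))
  have := congrArg (z ^ n * ·) hgz
  simpa only [g, mul_add, mul_div_cancel₀ _ hzn, mul_zero] using this

lemma exists_pos_forall_mem_ball_isRoot_eq {P : ℂ[X]} (hP : P ≠ 0) (z₀ : ℂ) :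
    ∃ ε > 0, ∀ z ∈ ball z₀ ε, P.IsRoot z → z = z₀ := by
  have hfin : {z | P.IsRoot z ∧ z ≠ z₀}.Finite :=
    P.roots.toFinset.finite_toSet.subset fun z hz => by simpa [hP] using hz.1
  obtain ⟨ε, hε, hball⟩ :=
    Metric.mem_nhds_iff.1 (hfin.isClosed.compl_mem_nhds fun h => h.2 rfl)
  exact ⟨ε, hε, fun z hz hroot => by_contra fun hne => hball hz ⟨hroot, hne⟩⟩

theorem eventually_exists_isRoot_X_pow_mul_add_dist_lt {P : ℂ[X]} (hP : P ≠ 0) (Q : ℂ[X])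
    {z₀ : ℂ} (hz₀ : P.IsRoot z₀) (h1 : 1 < ‖z₀‖) {δ : ℝ} (hδ : 0 < δ) :
    ∀ᶠ n in atTop, ∃ z, (X ^ n * P + Q).IsRoot z ∧ dist z z₀ < δ := by
  obtain ⟨ε, hε, hiso⟩ := exists_pos_forall_mem_ball_isRoot_eq hP z₀
  obtain ⟨r, hr, hrmin⟩ := exists_between (lt_min (lt_min hδ hε) (sub_pos.2 h1))
  obtain ⟨⟨hrδ, hrε⟩, hr1⟩ := by simpa only [lt_min_iff] using hrmin
  have hsphere : ∀ z ∈ sphere z₀ r, ¬P.IsRoot z := fun z hz hroot => by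
    have hzz₀ := hiso z (sphere_subset_ball hrε hz) hroot
    rw [mem_sphere, hzz₀, dist_self] at hz
    exact hr.ne hz
  filter_upwards
    [eventually_exists_isRoot_X_pow_mul_add_mem_ball Q hr hz₀ hsphere (by linarith)]
    with n ⟨z, hz, hroot⟩
  exact ⟨z, hroot, (mem_ball.1 hz).trans hrδ⟩

theorem tendsto_maxRootAbs_X_pow_mul_add {A : ℤ[X]} (hA : A ≠ 0) (B : ℤ[X]) {z : ℂ}
    (hz : aeval z A = 0) (hz1 : 1 < ‖z‖) :
    Tendsto (fun n => maxRootAbs (X ^ n * A + B)) atTop (𝓝 (maxRootAbs A)) := by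
  obtain ⟨⟨z₀, hz₀, hz₀max⟩, hmax⟩ := isGreatest_maxRootAbs hA hz
  set P := A.map (algebraMap ℤ ℂ)
  set Q := B.map (algebraMap ℤ ℂ)
  have hP : P ≠ 0 := (Polynomial.map_ne_zero_iff (algebraMap ℤ ℂ).injective_int).2 hA
  have hProot : ∀ w, P.IsRoot w ↔ aeval w A = 0 := fun w => by
    rw [IsRoot.def, eval_map_algebraMap]
  have hroot : ∀ n w, aeval w (X ^ n * A + B) = 0 ↔
      (X ^ n * P + Q).IsRoot w := fun n w => by
    rw [IsRoot.def, ← eval_map_algebraMap, Polynomial.map_add, Polynomial.map_mul,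
      Polynomial.map_pow, map_X]
  have hA1 : 1 < maxRootAbs A := hz1.trans_le (hmax ⟨z, hz, rfl⟩)
  have hupper : ∀ L, maxRootAbs A < L →
      ∀ᶠ n in atTop, ∀ w : ℂ, aeval w (X ^ n * A + B) = 0 → ‖w‖ < L := fun L hL =>
    (eventually_forall_isRoot_X_pow_mul_add_norm_lt hP Q
      (fun w hw => hmax ⟨w, (hProot w).1 hw, rfl⟩) hL (hA1.trans hL)).mono
      fun n hn w hw => hn w ((hroot n w).1 hw)
  refine tendsto_order.2 ⟨fun a ha => ?_, fun a ha => ?_⟩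
  · filter_upwards [hupper _ (lt_add_one _), eventually_exists_isRoot_X_pow_mul_add_dist_lt hP Q
      ((hProot z₀).2 hz₀) (hA1.trans_eq hz₀max.symm) (sub_pos.2 ha)] with n hbdd ⟨w, hw, hdist⟩
    have htri := norm_sub_norm_le z₀ w
    rw [← dist_eq_norm, dist_comm] at htri
    exact (by linarith : a < ‖w‖).trans_le
      (norm_le_maxRootAbs (fun v hv => (hbdd v hv).le) ((hroot n w).2 hw))
  · filter_upwards [hupper ((maxRootAbs A + a) / 2) (by linarith)] with n hn
    exact (maxRootAbs_le (by linarith) fun w hw => (hn w hw).le).trans_lt (by linarith)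

lemma exists_isRoot_one_lt_norm {P : ℂ[X]} (hP : P.Monic) (h0 : 1 < ‖P.coeff 0‖) :
    ∃ z, P.IsRoot z ∧ 1 < ‖z‖ := by
  by_contra! hle
  have hsplit := IsAlgClosed.splits P
  have hprod : ‖P.roots.prod‖ ≤ 1 := by
    rw [← normHom_apply, map_multiset_prod]
    simpa using Multiset.prod_map_le_pow_card (f := (normHom : ℂ →*₀ ℝ)) (r := 1)
      (fun w _ => norm_nonneg w) fun w hw => hle w (isRoot_of_mem_roots hw)
  rw [hsplit.coeff_zero_eq_prod_roots_of_monic hP, norm_mul, norm_pow, norm_neg, norm_one,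
    one_pow, one_mul] at h0
  exact h0.not_ge hprod

lemma exists_aeval_eq_zero_one_lt_norm {p : ℤ[X]} (hp : p.Monic) (h0 : 1 < |p.coeff 0|) :
    ∃ z : ℂ, aeval z p = 0 ∧ 1 < ‖z‖ := by
  obtain ⟨z, hz, hz1⟩ := exists_isRoot_one_lt_norm (hp.map (algebraMap ℤ ℂ))
    (by simpa [coeff_map] using (by exact_mod_cast h0 : (1 : ℝ) < |(p.coeff 0 : ℝ)|))
  exact ⟨z, by rwa [IsRoot.def, eval_map_algebraMap] at hz, hz1⟩

section Step

variable {R : Type*} [CommRing R] {h : R[X]}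

lemma monic_X_pow_mul_X_sub_one_mul_add_C_mul_reverse [Nontrivial R] (hh : h.Monic) (a : ℕ)
    (c : R) :
    (X ^ a * (X - 1) * h + C c * h.reverse).Monic := by
  have h1 : (X - 1 : R[X]).Monic := by simpa using monic_X_sub_C (1 : R)
  have hd1 : (X - 1 : R[X]).natDegree = 1 := by simpa using natDegree_X_sub_C (1 : R)
  refine (((monic_X_pow a).mul h1).mul hh).add_of_left (degree_lt_degree ?_)
  rw [((monic_X_pow a).mul h1).natDegree_mul hh, (monic_X_pow a).natDegree_mul h1,
    natDegree_X_pow, hd1]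
  exact (natDegree_C_mul_le c _).trans_lt ((reverse_natDegree_le h).trans_lt (by omega))

lemma coeff_zero_X_pow_mul_X_sub_one_mul_add_C_mul_reverse (hh : h.Monic) {a : ℕ} (ha : a ≠ 0)
    (c : R) : (X ^ a * (X - 1) * h + C c * h.reverse).coeff 0 = c := by
  simp [mul_coeff_zero, ha.symm, coeff_zero_reverse, hh.leadingCoeff]

end Step

/-- The cofactors evolve by `h ↦ X^a (X - 1) h ± 2 h_*`, starting from `h = 1`. -/
lemma exists_Rpoly_eq_X_mul (m : ℕ → ℕ) :
    ∀ k, (∀ j, 1 ≤ j → j ≤ k + 1 → 1 ≤ m j) →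
      ∃ h : ℤ[X], Rpoly m (k + 1) = X * h ∧ h.Monic ∧ |h.coeff 0| = 2
  | 0, hm => by
    refine ⟨X ^ m 1 * (X - 1) * 1 + C (-2) * (1 : ℤ[X]).reverse, ?_,
      monic_X_pow_mul_X_sub_one_mul_add_C_mul_reverse monic_one _ _, ?_⟩
    · rw [Rpoly, ← C_1, reverse_C]
      simp only [map_neg, C_ofNat, C_1]
      ring
    · rw [coeff_zero_X_pow_mul_X_sub_one_mul_add_C_mul_reverse monic_one
        (Nat.one_le_iff_ne_zero.1 (hm 1 le_rfl le_rfl))]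
      rfl
  | k + 1, hm => by
    obtain ⟨h, hfh, hh, -⟩ := exists_Rpoly_eq_X_mul m k fun j hj hjk => hm j hj (by omega)
    refine ⟨X ^ m (k + 2) * (X - 1) * h + C (2 * (-1) ^ k) * h.reverse, ?_,
      monic_X_pow_mul_X_sub_one_mul_add_C_mul_reverse hh _ _, ?_⟩
    · rw [Rpoly, hfh, reverse_X_mul]
      simp only [map_mul, map_pow, map_neg, C_ofNat, C_1]
      ring
    · rw [coeff_zero_X_pow_mul_X_sub_one_mul_add_C_mul_reverse hh
        (Nat.one_le_iff_ne_zero.1 (hm (k + 2) (by omega) le_rfl))]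
      simp

lemma Rpoly_congr {m m' : ℕ → ℕ} : ∀ {k}, (∀ j ≤ k, m j = m' j) → Rpoly m k = Rpoly m' k
  | 0, _ => rfl
  | 1, h => by rw [Rpoly, Rpoly, h 1 le_rfl]
  | k + 2, h => by rw [Rpoly, Rpoly, h (k + 2) le_rfl, Rpoly_congr fun j hj => h j (by omega)]

lemma Rpoly_update_add_two (m : ℕ → ℕ) (k n : ℕ) :
    Rpoly (Function.update m (k + 2) n) (k + 2) =
      X ^ n * ((X - 1) * Rpoly m (k + 1))
        + (-1) ^ (k + 2) * (2 * X) * (Rpoly m (k + 1)).reverse := by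
  rw [Rpoly, Function.update_self, Rpoly_congr fun j hj => Function.update_of_ne (by omega) n m,
    mul_assoc (X ^ n)]

/-- For fixed `i ≥ 2` and `m_1, …, m_{i-1} ≥ 1`,
`λ(R_{(m_1,…,m_{i-1},m_i)}) → λ(R_{(m_1,…,m_{i-1})})` as `m_i → ∞`. -/
theorem Rpoly_maxRootAbs_tendsto (i : ℕ) (hi : 2 ≤ i) (m : ℕ → ℕ)
    (hm : ∀ j, 1 ≤ j → j ≤ i - 1 → 1 ≤ m j) :
    ∀ ε : ℝ, 0 < ε → ∃ M : ℕ, ∀ n : ℕ, M ≤ n →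
      |maxRootAbs (Rpoly (Function.update m i n) i)
        - maxRootAbs (Rpoly m (i - 1))| < ε := by
  obtain ⟨k, rfl⟩ : ∃ k, i = k + 2 := ⟨i - 2, by omega⟩
  obtain ⟨h, hfh, hh, hh0⟩ := exists_Rpoly_eq_X_mul m k fun j hj hjk => hm j hj (by omega)
  obtain ⟨z, hz, hz1⟩ := exists_aeval_eq_zero_one_lt_norm hh (by rw [hh0]; norm_num)
  have hf : Rpoly m (k + 1) ≠ 0 := hfh ▸ (monic_X.mul hh).ne_zero
  have hfz : aeval z (Rpoly m (k + 1)) = 0 := by rw [hfh, map_mul, hz, mul_zero]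
  have hX1 : (X - 1 : ℤ[X]) ≠ 0 := by simpa using X_sub_C_ne_zero (1 : ℤ)
  have hlim := tendsto_maxRootAbs_X_pow_mul_add (mul_ne_zero hX1 hf)
    ((-1) ^ (k + 2) * (2 * X) * (Rpoly m (k + 1)).reverse) (z := z) (by simp [hfz]) hz1
  rw [maxRootAbs_X_sub_one_mul hf hfz hz1.le] at hlim
  intro ε hε
  obtain ⟨M, hM⟩ := Metric.tendsto_atTop.1 hlim ε hε
  exact ⟨M, fun n hn => by rw [← Real.dist_eq, Rpoly_update_add_two]; exact hM n hn⟩
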